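/- Let ψ⁺, ψ⁻, ψ₂ : (0,∞) → ℂ and A₀, A₂ : (0,∞) → ℝ with ψ₂/r = (ψ⁺ - ψ⁻)/(2i), A₂(r) + 1 = -(1/4)∫_0^r (|ψ⁺|² - |ψ⁻|²) s ds, and A₀ = -(1/2)Re(\bar{ψ⁺}ψ⁻) - ∫_r^∞ Re(\bar{ψ⁺}ψ⁻)(s)/s ds. Then the nonlinearity N⁻(ψ⁻) = (A₀ - 2(A₂+1)/r² - r^{-1}Im(ψ₂ \bar{ψ⁻})) ψ⁻ satisfies ‖N⁻(ψ⁻)‖_{L^{4/3}(r dr)} ≲ ‖ψ⁺‖³_{L⁴(r dr)} + ‖ψ⁻‖³_{L⁴(r dr)}. -/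

import Mathlib

open MeasureTheory Set
open scoped ENNReal NNReal

/-!
Every term of the coefficient of `ψ⁻` in `N⁻(ψ⁻)` is bounded pointwise by `q = |ψ⁺|² + |ψ⁻|²`,
by the tail integral `∫_r^∞ q(s) ds / s`, or by the average `r⁻² ∫_0^r q(s) s ds`. Both integral
operators are bounded on `L²(r dr)` (Hardy's inequalities: Cauchy–Schwarz against
`∫_r^∞ s⁻² ds = r⁻¹`, then a swap of the order of integration), and
`‖q‖_{L²} ≤ ‖ψ⁺‖²_{L⁴} + ‖ψ⁻‖²_{L⁴}`. Hölder's inequality `L² · L⁴ ⊆ L^{4/3}` then bounds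
`N⁻(ψ⁻)` by `(‖ψ⁺‖²_{L⁴} + ‖ψ⁻‖²_{L⁴}) ‖ψ⁻‖_{L⁴}`.
-/

/-- The measure `r dr` on `(0,∞)`. -/
noncomputable def muRad : Measure ℝ :=
  (volume.restrict (Set.Ioi (0:ℝ))).withDensity (fun r => ENNReal.ofReal r)

open scoped ComplexConjugate

section

variable {α : Type*} [MeasurableSpace α] {μ : Measure α}

theorem eLpNorm_ennreal_mul_le {p q r : ℝ≥0∞} [hpqr : ENNReal.HolderTriple p q r]
    (hp : p ≠ ∞) (hq : q ≠ ∞) {f g : α → ℝ≥0∞} (hf : AEMeasurable f μ) (hg : AEMeasurable g μ) :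
    eLpNorm (f * g) r μ ≤ eLpNorm f p μ * eLpNorm g q μ := by
  rcases eq_or_ne r 0 with rfl | hr0
  · simp
  have hinv := hpqr.inv_eq p q r
  have hp0 : p ≠ 0 := by rintro rfl; simp_all
  have hq0 : q ≠ 0 := by rintro rfl; simp_all
  have hr : r ≠ ∞ := ne_top_of_le_ne_top hp (hpqr.le p q r)
  have hrp : r.toReal < p.toReal := by
    refine ENNReal.toReal_strict_mono hp (ENNReal.inv_lt_inv.mp ?_)
    rw [hinv]
    exact ENNReal.lt_add_right (by simpa using hp0) (by simpa using hq)
  have hpqr' : 1 / r.toReal = 1 / p.toReal + 1 / q.toReal := by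
    simpa [← ENNReal.toReal_inv, ENNReal.toReal_add, hp0, hq0] using congr(ENNReal.toReal $hinv)
  have := ENNReal.lintegral_Lp_mul_le_Lq_mul_Lr (ENNReal.toReal_pos hr0 hr) hrp hpqr' μ hf hg
  rw [eLpNorm_eq_eLpNorm' hr0 hr, eLpNorm_eq_eLpNorm' hp0 hp, eLpNorm_eq_eLpNorm' hq0 hq]
  simpa [eLpNorm'_eq_lintegral_enorm] using this

theorem eLpNorm_two_sq (f : α → ℝ≥0∞) : eLpNorm f 2 μ ^ 2 = ∫⁻ x, f x ^ 2 ∂μ := by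
  simpa using eLpNorm_nnreal_pow_eq_lintegral (f := f) (μ := μ) (p := 2) two_ne_zero

theorem eLpNorm_two_le_of_lintegral_sq_le {f g : α → ℝ≥0∞}
    (h : ∫⁻ x, f x ^ 2 ∂μ ≤ ∫⁻ x, g x ^ 2 ∂μ) : eLpNorm f 2 μ ≤ eLpNorm g 2 μ := by
  rw [← eLpNorm_two_sq, ← eLpNorm_two_sq] at h
  exact (ENNReal.pow_le_pow_left_iff two_ne_zero).1 h

theorem lintegral_mul_sq_le {f g : α → ℝ≥0∞} (hf : AEMeasurable f μ) (hg : AEMeasurable g μ) :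
    (∫⁻ x, f x * g x ∂μ) ^ 2 ≤ (∫⁻ x, f x ^ 2 ∂μ) * ∫⁻ x, g x ^ 2 ∂μ := by
  have holder := eLpNorm_ennreal_mul_le (p := 2) (q := 2) (r := 1) (by simp) (by simp) hf hg
  rw [eLpNorm_one_eq_lintegral_enorm] at holder
  calc (∫⁻ x, f x * g x ∂μ) ^ 2 ≤ (eLpNorm f 2 μ * eLpNorm g 2 μ) ^ 2 := by gcongr; exact holder
    _ = _ := by rw [mul_pow, eLpNorm_two_sq, eLpNorm_two_sq]

theorem eLpNorm_enorm_sq {E : Type*} [NormedAddCommGroup E] (f : α → E) :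
    eLpNorm (fun x => ‖f x‖ₑ ^ 2) 2 μ = eLpNorm f 4 μ ^ 2 := by
  have := eLpNorm_enorm_rpow f (p := 2) (μ := μ) (q := 2) two_pos
  norm_num at this
  convert this using 2

end

instance ENNReal.holderTriple_two_four : ENNReal.HolderTriple 2 4 (4/3) := by
  constructor
  rw [← ENNReal.toReal_eq_toReal_iff' (by simp) (by simp), ENNReal.toReal_add (by simp) (by simp)]
  simp [ENNReal.toReal_inv, ENNReal.toReal_div]
  norm_num

theorem ENNReal.sq_add_sq_mul_le (x y : ℝ≥0∞) : (x ^ 2 + y ^ 2) * y ≤ 2 * (x ^ 3 + y ^ 3) := by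
  have h : x ^ 2 * y ≤ x ^ 3 + y ^ 3 := by
    rcases le_total x y with h | h
    · calc x ^ 2 * y ≤ y ^ 2 * y := by gcongr
        _ ≤ x ^ 3 + y ^ 3 := by rw [← pow_succ]; exact le_add_self
    · calc x ^ 2 * y ≤ x ^ 2 * x := by gcongr
        _ ≤ x ^ 3 + y ^ 3 := by rw [← pow_succ]; exact le_self_add
  calc (x ^ 2 + y ^ 2) * y = x ^ 2 * y + y ^ 3 := by ring
    _ ≤ (x ^ 3 + y ^ 3) + (x ^ 3 + y ^ 3) := add_le_add h le_add_self
    _ = 2 * (x ^ 3 + y ^ 3) := by ring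

theorem lintegral_Ioi_inv_sq {r : ℝ} (hr : 0 < r) :
    ∫⁻ s in Ioi r, (ENNReal.ofReal s)⁻¹ ^ 2 = (ENNReal.ofReal r)⁻¹ := by
  have hint := integrableOn_Ioi_rpow_of_lt (by norm_num : (-2:ℝ) < -1) hr
  rw [setLIntegral_congr_fun measurableSet_Ioi (g := fun s => ENNReal.ofReal (s ^ (-2:ℝ))),
    ← ofReal_integral_eq_lintegral_ofReal hint, integral_Ioi_rpow_of_lt (by norm_num) hr]
  · norm_num [Real.rpow_neg_one, ENNReal.ofReal_inv_of_pos hr]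
  · exact ae_restrict_of_forall_mem measurableSet_Ioi fun s hs =>
      Real.rpow_nonneg (hr.trans hs).le _
  · intro s hs
    dsimp only
    rw [← ENNReal.ofReal_inv_of_pos (hr.trans hs),
      ← ENNReal.ofReal_pow (inv_nonneg.2 (hr.trans hs).le)]
    norm_num [Real.rpow_neg (hr.trans hs).le]

theorem lintegral_Ioi_lintegral_Ioi_swap {K : ℝ → ℝ → ℝ≥0∞}
    (hK : Measurable (Function.uncurry K)) :
    ∫⁻ r in Ioi 0, ∫⁻ s in Ioi r, K r s = ∫⁻ s in Ioi 0, ∫⁻ r in Ioo 0 s, K r s := by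
  set F : ℝ → ℝ → ℝ≥0∞ := fun r s => if r < s then K r s else 0
  have hF : Measurable (Function.uncurry F) :=
    Measurable.ite (measurableSet_lt measurable_fst measurable_snd) hK measurable_const
  have hleft : ∀ r ∈ Ioi (0:ℝ), ∫⁻ s in Ioi r, K r s = ∫⁻ s in Ioi 0, F r s := by
    intro r hr
    rw [← lintegral_indicator measurableSet_Ioi, ← lintegral_indicator measurableSet_Ioi]
    congr 1 with s
    by_cases hs : r < s
    · simp [F, indicator, hs, (mem_Ioi.1 hr).trans hs]
    · simp [F, indicator, hs]
  have hright : ∀ s, ∫⁻ r in Ioo 0 s, K r s = ∫⁻ r in Ioi 0, F r s := by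
    intro s
    rw [← lintegral_indicator measurableSet_Ioo, ← lintegral_indicator measurableSet_Ioi]
    congr 1 with r
    by_cases hr : 0 < r <;> simp [F, indicator, hr]
  rw [setLIntegral_congr_fun measurableSet_Ioi hleft, lintegral_lintegral_swap hF.aemeasurable]
  simp_rw [hright]

theorem lintegral_muRad (f : ℝ → ℝ≥0∞) :
    ∫⁻ r, f r ∂muRad = ∫⁻ r in Ioi 0, f r * ENNReal.ofReal r := by
  rw [muRad, lintegral_withDensity_eq_lintegral_mul_non_measurable _
    ENNReal.measurable_ofReal (ae_of_all _ fun _ => ENNReal.ofReal_lt_top)]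
  simp only [Pi.mul_apply, mul_comm]

theorem ae_muRad_pos : ∀ᵐ r ∂muRad, 0 < r :=
  withDensity_absolutelyContinuous _ _ (ae_restrict_mem measurableSet_Ioi)

-- `-[r∂_r]⁻¹ h` in the paper's notation.
noncomputable def radialTail (h : ℝ → ℝ≥0∞) (r : ℝ) : ℝ≥0∞ :=
  ∫⁻ s in Ioi r, h s / ENNReal.ofReal s

noncomputable def radialAverage (g : ℝ → ℝ≥0∞) (r : ℝ) : ℝ≥0∞ :=
  (∫⁻ s in Ioo 0 r, g s * ENNReal.ofReal s) / ENNReal.ofReal r ^ 2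

theorem measurable_radialTail (h : ℝ → ℝ≥0∞) : Measurable (radialTail h) :=
  Antitone.measurable fun _ _ hab => lintegral_mono_set (Ioi_subset_Ioi hab)

theorem measurable_radialAverage (g : ℝ → ℝ≥0∞) : Measurable (radialAverage g) :=
  (Monotone.measurable fun _ _ hab => lintegral_mono_set (Ioo_subset_Ioo_right hab)).div
    (by fun_prop)

theorem radialTail_mono {h h' : ℝ → ℝ≥0∞} (hle : h ≤ h') : radialTail h ≤ radialTail h' :=
  fun _ => lintegral_mono fun s => ENNReal.div_le_div_right (hle s) _

theorem radialAverage_mono {g g' : ℝ → ℝ≥0∞} (hle : g ≤ g') :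
    radialAverage g ≤ radialAverage g' :=
  fun _ => ENNReal.div_le_div_right (lintegral_mono fun s => by gcongr; exact hle s) _

theorem radialTail_sq_mul_le {h : ℝ → ℝ≥0∞} (hh : Measurable h) {r : ℝ} (hr : 0 < r) :
    radialTail h r ^ 2 * ENNReal.ofReal r ≤ ∫⁻ s in Ioi r, h s ^ 2 := by
  have cs := lintegral_mul_sq_le (μ := volume.restrict (Ioi r)) hh.aemeasurable
    (g := fun s => (ENNReal.ofReal s)⁻¹) (by fun_prop)
  rw [lintegral_Ioi_inv_sq hr] at cs
  calc radialTail h r ^ 2 * ENNReal.ofReal r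
      ≤ (∫⁻ s in Ioi r, h s ^ 2) * (ENNReal.ofReal r)⁻¹ * ENNReal.ofReal r := by
        simpa only [radialTail, div_eq_mul_inv] using mul_le_mul_left cs _
    _ = ∫⁻ s in Ioi r, h s ^ 2 := by
        rw [mul_assoc, ENNReal.inv_mul_cancel (by simpa using hr) ENNReal.ofReal_ne_top, mul_one]

theorem eLpNorm_radialTail_le {h : ℝ → ℝ≥0∞} (hh : Measurable h) :
    eLpNorm (radialTail h) 2 muRad ≤ eLpNorm h 2 muRad := by
  refine eLpNorm_two_le_of_lintegral_sq_le ?_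
  calc ∫⁻ r, radialTail h r ^ 2 ∂muRad
      = ∫⁻ r in Ioi 0, radialTail h r ^ 2 * ENNReal.ofReal r := lintegral_muRad _
    _ ≤ ∫⁻ r in Ioi 0, ∫⁻ s in Ioi r, h s ^ 2 :=
        setLIntegral_mono' measurableSet_Ioi fun r hr => radialTail_sq_mul_le hh hr
    _ = ∫⁻ s in Ioi 0, ∫⁻ r in Ioo 0 s, h s ^ 2 :=
        lintegral_Ioi_lintegral_Ioi_swap (by fun_prop)
    _ = ∫⁻ r, h r ^ 2 ∂muRad := by simp [lintegral_muRad]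

theorem radialAverage_sq_mul_le {g : ℝ → ℝ≥0∞} (hg : Measurable g) {r : ℝ} (hr : 0 < r) :
    radialAverage g r ^ 2 * ENNReal.ofReal r
      ≤ ∫⁻ s in Ioo 0 r, (g s * ENNReal.ofReal s) ^ 2 * (ENNReal.ofReal r)⁻¹ ^ 2 := by
  set a := ENNReal.ofReal r
  have cs := lintegral_mul_sq_le (μ := volume.restrict (Ioo 0 r))
    (f := fun s => g s * ENNReal.ofReal s) (g := fun _ => 1) (by fun_prop) aemeasurable_const
  simp only [mul_one, one_pow, one_mul, setLIntegral_const, Real.volume_Ioo, sub_zero] at cs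
  rw [lintegral_mul_const _ (by fun_prop)]
  calc radialAverage g r ^ 2 * a
      = (∫⁻ s in Ioo 0 r, g s * ENNReal.ofReal s) ^ 2 * a⁻¹ ^ 4 * a := by
        rw [radialAverage, div_eq_mul_inv, ENNReal.inv_pow]; ring
    _ ≤ (∫⁻ s in Ioo 0 r, (g s * ENNReal.ofReal s) ^ 2) * a * a⁻¹ ^ 4 * a := by gcongr
    _ = (∫⁻ s in Ioo 0 r, (g s * ENNReal.ofReal s) ^ 2) * a⁻¹ ^ 2 * (a * a⁻¹) ^ 2 := by ring
    _ = (∫⁻ s in Ioo 0 r, (g s * ENNReal.ofReal s) ^ 2) * a⁻¹ ^ 2 := by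
        rw [ENNReal.mul_inv_cancel (by simpa [a] using hr) ENNReal.ofReal_ne_top, one_pow, mul_one]

theorem eLpNorm_radialAverage_le {g : ℝ → ℝ≥0∞} (hg : Measurable g) :
    eLpNorm (radialAverage g) 2 muRad ≤ eLpNorm g 2 muRad := by
  refine eLpNorm_two_le_of_lintegral_sq_le ?_
  calc ∫⁻ r, radialAverage g r ^ 2 ∂muRad
      = ∫⁻ r in Ioi 0, radialAverage g r ^ 2 * ENNReal.ofReal r := lintegral_muRad _
    _ ≤ ∫⁻ r in Ioi 0, ∫⁻ s in Ioo 0 r,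
          (g s * ENNReal.ofReal s) ^ 2 * (ENNReal.ofReal r)⁻¹ ^ 2 :=
        setLIntegral_mono' measurableSet_Ioi fun r hr => radialAverage_sq_mul_le hg hr
    _ = ∫⁻ s in Ioi 0, ∫⁻ r in Ioi s,
          (g s * ENNReal.ofReal s) ^ 2 * (ENNReal.ofReal r)⁻¹ ^ 2 :=
        (lintegral_Ioi_lintegral_Ioi_swap (by fun_prop)).symm
    _ = ∫⁻ s in Ioi 0, g s ^ 2 * ENNReal.ofReal s := by
        refine setLIntegral_congr_fun measurableSet_Ioi fun s hs => ?_
        rw [lintegral_const_mul _ (by fun_prop), lintegral_Ioi_inv_sq hs, mul_pow,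
          sq (ENNReal.ofReal s), mul_assoc, mul_assoc,
          ENNReal.mul_inv_cancel (by simpa using hs) ENNReal.ofReal_ne_top, mul_one]
    _ = ∫⁻ r, g r ^ 2 ∂muRad := (lintegral_muRad _).symm

theorem enorm_setIntegral_Ioi_div_le (u : ℝ → ℝ) {r : ℝ} (hr : 0 ≤ r) :
    ‖∫ s in Ioi r, u s / s‖ₑ ≤ radialTail (fun s => ‖u s‖ₑ) r := by
  refine (enorm_integral_le_lintegral_enorm _).trans
    (setLIntegral_mono' measurableSet_Ioi fun s hs => ?_)
  have hs0 : 0 < s := hr.trans_lt hs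
  rw [div_eq_mul_inv, enorm_mul, enorm_inv hs0.ne', Real.enorm_eq_ofReal hs0.le, ← div_eq_mul_inv]

theorem enorm_setIntegral_Ioo_mul_div_sq_le (u : ℝ → ℝ) {r : ℝ} (hr : 0 < r) :
    ‖(∫ s in Ioo 0 r, u s * s) / r ^ 2‖ₑ ≤ radialAverage (fun s => ‖u s‖ₑ) r := by
  rw [div_eq_mul_inv, enorm_mul, enorm_inv (by positivity), enorm_pow, Real.enorm_eq_ofReal hr.le,
    ← div_eq_mul_inv, radialAverage]
  gcongr
  refine (enorm_integral_le_lintegral_enorm _).trans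
    (setLIntegral_mono' measurableSet_Ioo fun s hs => ?_)
  rw [enorm_mul, Real.enorm_eq_ofReal hs.1.le]

noncomputable def sqNormSum (ψp ψm : ℝ → ℂ) (s : ℝ) : ℝ≥0∞ := ‖ψp s‖ₑ ^ 2 + ‖ψm s‖ₑ ^ 2

theorem Complex.enorm_real (x : ℝ) : ‖(x : ℂ)‖ₑ = ‖x‖ₑ := by
  rw [← ofReal_norm, ← ofReal_norm, Complex.norm_real]

theorem enorm_le_enorm_sq_add_enorm_sq {x : ℝ} {z w : ℂ} (h : |x| ≤ ‖z‖ ^ 2 + ‖w‖ ^ 2) :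
    ‖x‖ₑ ≤ ‖z‖ₑ ^ 2 + ‖w‖ₑ ^ 2 := by
  rw [Real.enorm_eq_ofReal_abs, ← ofReal_norm, ← ofReal_norm, ← ENNReal.ofReal_pow (norm_nonneg _),
    ← ENNReal.ofReal_pow (norm_nonneg _), ← ENNReal.ofReal_add (by positivity) (by positivity)]
  exact ENNReal.ofReal_le_ofReal h

theorem abs_re_conj_mul_le (z w : ℂ) : |(conj z * w).re| ≤ ‖z‖ ^ 2 + ‖w‖ ^ 2 := by
  have := Complex.abs_re_le_norm (conj z * w)
  rw [norm_mul, Complex.norm_conj] at this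
  nlinarith [sq_nonneg (‖z‖ - ‖w‖)]

theorem abs_im_div_two_I_mul_conj_le (z w : ℂ) :
    |((z - w) / (2 * Complex.I) * conj w).im| ≤ ‖z‖ ^ 2 + ‖w‖ ^ 2 := by
  have := Complex.abs_im_le_norm ((z - w) / (2 * Complex.I) * conj w)
  rw [norm_mul, Complex.norm_conj, norm_div, norm_mul, Complex.norm_I, Complex.norm_two] at this
  have hzw := norm_sub_le z w
  nlinarith [sq_nonneg (‖z‖ - ‖w‖), norm_nonneg z, norm_nonneg w]

theorem enorm_A₀_le (ψp ψm : ℝ → ℂ) {r : ℝ} (hr : 0 ≤ r) :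
    ‖-(1/2) * (conj (ψp r) * ψm r).re - ∫ s in Ioi r, (conj (ψp s) * ψm s).re / s‖ₑ
      ≤ sqNormSum ψp ψm r + radialTail (sqNormSum ψp ψm) r := by
  refine enorm_sub_le.trans (add_le_add ?_ ?_)
  · refine enorm_le_enorm_sq_add_enorm_sq ?_
    rw [abs_mul]
    linarith [abs_re_conj_mul_le (ψp r) (ψm r), abs_nonneg (conj (ψp r) * ψm r).re,
      show |(-(1/2) : ℝ)| = 1/2 by norm_num]
  · exact (enorm_setIntegral_Ioi_div_le _ hr).trans <| radialTail_mono
      (fun s => enorm_le_enorm_sq_add_enorm_sq (abs_re_conj_mul_le (ψp s) (ψm s))) r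

theorem enorm_A₂_le (ψp ψm : ℝ → ℂ) {r : ℝ} (hr : 0 < r) :
    ‖2 * (-(1/4) * ∫ s in Ioo 0 r, (‖ψp s‖ ^ 2 - ‖ψm s‖ ^ 2) * s) / r ^ 2‖ₑ
      ≤ radialAverage (sqNormSum ψp ψm) r := by
  have hsq (s : ℝ) : |‖ψp s‖ ^ 2 - ‖ψm s‖ ^ 2| ≤ ‖ψp s‖ ^ 2 + ‖ψm s‖ ^ 2 := by
    rw [abs_le]; constructor <;> nlinarith [sq_nonneg ‖ψp s‖, sq_nonneg ‖ψm s‖]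
  calc ‖2 * (-(1/4) * ∫ s in Ioo 0 r, (‖ψp s‖ ^ 2 - ‖ψm s‖ ^ 2) * s) / r ^ 2‖ₑ
      = ‖(-(1/2) : ℝ)‖ₑ * ‖(∫ s in Ioo 0 r, (‖ψp s‖ ^ 2 - ‖ψm s‖ ^ 2) * s) / r ^ 2‖ₑ := by
        rw [← enorm_mul]; ring_nf
    _ ≤ 1 * radialAverage (fun s => ‖‖ψp s‖ ^ 2 - ‖ψm s‖ ^ 2‖ₑ) r := by
        gcongr
        · simp [Real.enorm_eq_ofReal_abs]
        · exact enorm_setIntegral_Ioo_mul_div_sq_le _ hr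
    _ ≤ radialAverage (sqNormSum ψp ψm) r := by
        rw [one_mul]
        exact radialAverage_mono (fun s => enorm_le_enorm_sq_add_enorm_sq (hsq s)) r

theorem enorm_im_mul_conj_div_le {z w ζ : ℂ} {r : ℝ} (h : ζ / r = (z - w) / (2 * Complex.I)) :
    ‖(ζ * conj w).im / r‖ₑ ≤ ‖z‖ₑ ^ 2 + ‖w‖ₑ ^ 2 := by
  refine enorm_le_enorm_sq_add_enorm_sq ?_
  rw [← Complex.div_ofReal_im, mul_div_right_comm, h]
  exact abs_im_div_two_I_mul_conj_le z w

noncomputable def coefficientMajorant (q : ℝ → ℝ≥0∞) (r : ℝ) : ℝ≥0∞ :=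
  2 * q r + radialTail q r + radialAverage q r

theorem measurable_coefficientMajorant {q : ℝ → ℝ≥0∞} (hq : Measurable q) :
    Measurable (coefficientMajorant q) :=
  ((measurable_const.mul hq).add (measurable_radialTail q)).add (measurable_radialAverage q)

theorem enorm_coefficient_le {ψp ψm ψ₂ : ℝ → ℂ} {A₀ A₂ : ℝ → ℝ} {r : ℝ} (hr : 0 < r)
    (hψ₂ : ψ₂ r / (r : ℂ) = (ψp r - ψm r) / (2 * Complex.I))
    (hA₂ : A₂ r + 1 = -(1/4) * ∫ s in Ioo 0 r, (‖ψp s‖ ^ 2 - ‖ψm s‖ ^ 2) * s)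
    (hA₀ : A₀ r = -(1/2) * (conj (ψp r) * ψm r).re
      - ∫ s in Ioi r, (conj (ψp s) * ψm s).re / s) :
    ‖A₀ r - 2 * (A₂ r + 1) / r ^ 2 - (ψ₂ r * conj (ψm r)).im / r‖ₑ
      ≤ coefficientMajorant (sqNormSum ψp ψm) r := by
  calc ‖A₀ r - 2 * (A₂ r + 1) / r ^ 2 - (ψ₂ r * conj (ψm r)).im / r‖ₑ
      ≤ ‖A₀ r‖ₑ + ‖2 * (A₂ r + 1) / r ^ 2‖ₑ + ‖(ψ₂ r * conj (ψm r)).im / r‖ₑ :=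
        enorm_sub_le.trans (add_le_add_left enorm_sub_le _)
    _ ≤ (sqNormSum ψp ψm r + radialTail (sqNormSum ψp ψm) r)
          + radialAverage (sqNormSum ψp ψm) r + sqNormSum ψp ψm r := by
        rw [hA₀, hA₂]
        gcongr
        · exact enorm_A₀_le ψp ψm hr.le
        · exact enorm_A₂_le ψp ψm hr
        · exact enorm_im_mul_conj_div_le hψ₂
    _ = coefficientMajorant (sqNormSum ψp ψm) r := by rw [coefficientMajorant]; ring

theorem eLpNorm_coefficientMajorant_le {q : ℝ → ℝ≥0∞} (hq : Measurable q) :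
    eLpNorm (coefficientMajorant q) 2 muRad ≤ 4 * eLpNorm q 2 muRad := by
  calc eLpNorm (coefficientMajorant q) 2 muRad
      ≤ eLpNorm (fun r => 2 * q r) 2 muRad + eLpNorm (radialTail q) 2 muRad
          + eLpNorm (radialAverage q) 2 muRad := by
        have h2q : AEStronglyMeasurable (fun r => 2 * q r) muRad :=
          (measurable_const.mul hq).aestronglyMeasurable
        refine (eLpNorm_add_le (h2q.add (measurable_radialTail q).aestronglyMeasurable)
          (measurable_radialAverage q).aestronglyMeasurable one_le_two).trans
          (add_le_add_left (eLpNorm_add_le h2q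
            (measurable_radialTail q).aestronglyMeasurable one_le_two) _)
    _ ≤ 2 * eLpNorm q 2 muRad + eLpNorm q 2 muRad + eLpNorm q 2 muRad := by
        gcongr
        · exact eLpNorm_le_mul_eLpNorm_of_ae_le_mul'' 2 hq.aestronglyMeasurable
            (ae_of_all _ fun r => le_rfl)
        · exact eLpNorm_radialTail_le hq
        · exact eLpNorm_radialAverage_le hq
    _ = 4 * eLpNorm q 2 muRad := by ring

theorem eLpNorm_sqNormSum_le {μ : Measure ℝ} {ψp ψm : ℝ → ℂ} (hp : Measurable ψp)
    (hm : Measurable ψm) :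
    eLpNorm (sqNormSum ψp ψm) 2 μ ≤ eLpNorm ψp 4 μ ^ 2 + eLpNorm ψm 4 μ ^ 2 := by
  rw [← eLpNorm_enorm_sq ψp, ← eLpNorm_enorm_sq ψm]
  exact eLpNorm_add_le (f := fun s => ‖ψp s‖ₑ ^ 2) (g := fun s => ‖ψm s‖ₑ ^ 2)
    (hp.enorm.pow_const 2).aestronglyMeasurable (hm.enorm.pow_const 2).aestronglyMeasurable
    one_le_two

/-- The nonlinearity `N⁻(ψ⁻) = (A₀ - 2(A₂+1)/r² - r⁻¹ Im(ψ₂ ψ̄⁻)) ψ⁻`, with `ψ₂, A₂, A₀`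
reconstructed from `ψ^±`, satisfies `‖N⁻(ψ⁻)‖_{L^{4/3}(r dr)} ≲ ‖ψ⁺‖³_{L⁴} + ‖ψ⁻‖³_{L⁴}`. -/
theorem stmt15 :
    ∃ C : ℝ≥0, 0 < C ∧ ∀ (ψp ψm ψ₂ : ℝ → ℂ) (A₀ A₂ : ℝ → ℝ),
      Measurable ψp → Measurable ψm →
      (∀ r ∈ Set.Ioi (0:ℝ), ψ₂ r / (r : ℂ) = (ψp r - ψm r) / (2 * Complex.I)) →
      (∀ r ∈ Set.Ioi (0:ℝ),
        A₂ r + 1 = -(1/4) * ∫ s in Set.Ioo (0:ℝ) r, (‖ψp s‖ ^ 2 - ‖ψm s‖ ^ 2) * s) →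
      (∀ r ∈ Set.Ioi (0:ℝ),
        A₀ r = -(1/2) * ((starRingEnd ℂ) (ψp r) * ψm r).re
          - ∫ s in Set.Ioi r, ((starRingEnd ℂ) (ψp s) * ψm s).re / s) →
      eLpNorm (fun r =>
          ((A₀ r - 2 * (A₂ r + 1) / r ^ 2
            - (ψ₂ r * (starRingEnd ℂ) (ψm r)).im / r : ℝ) : ℂ) * ψm r)
        (4/3 : ℝ≥0∞) muRad
        ≤ C * (eLpNorm ψp 4 muRad ^ (3:ℕ) + eLpNorm ψm 4 muRad ^ (3:ℕ)) := by
  refine ⟨8, by norm_num, fun ψp ψm ψ₂ A₀ A₂ hψp hψm hψ₂ hA₂ hA₀ => ?_⟩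
  set q := sqNormSum ψp ψm
  have hq : Measurable q := by unfold q sqNormSum; fun_prop
  calc _ ≤ eLpNorm (coefficientMajorant q * fun r => ‖ψm r‖ₑ) (4/3) muRad := by
        refine eLpNorm_mono_enorm_ae (ae_muRad_pos.mono fun r hr => ?_)
        rw [enorm_mul, Complex.enorm_real, Pi.mul_apply, enorm_eq_self]
        gcongr
        exact enorm_coefficient_le hr (hψ₂ r hr) (hA₂ r hr) (hA₀ r hr)
    _ ≤ eLpNorm (coefficientMajorant q) 2 muRad * eLpNorm ψm 4 muRad := by
        rw [← eLpNorm_enorm ψm]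
        exact eLpNorm_ennreal_mul_le (by simp) (by simp)
          (measurable_coefficientMajorant hq).aemeasurable hψm.enorm.aemeasurable
    _ ≤ 4 * (eLpNorm ψp 4 muRad ^ 2 + eLpNorm ψm 4 muRad ^ 2) * eLpNorm ψm 4 muRad := by
        gcongr
        exact (eLpNorm_coefficientMajorant_le hq).trans
          (by gcongr; exact eLpNorm_sqNormSum_le hψp hψm)
    _ ≤ 4 * (2 * (eLpNorm ψp 4 muRad ^ 3 + eLpNorm ψm 4 muRad ^ 3)) := by
        rw [mul_assoc]; exact mul_le_mul_right (ENNReal.sq_add_sq_mul_le _ _) 4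
    _ = _ := by push_cast; ring
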